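/- arXiv:1407.5769 — 2 statements merged into one kernel-verified Lean document; each statement's English description precedes it below -/
import Mathlib

section
/- Let H be a complex Hilbert space, ψ ∈ H, γ ≠ 0 a real number, and let Z_A, X_A, Z_B, X_B, Z_C, X_C be binary observables on H such that every operator in {Z_A, X_A} commutes with every operator in {Z_B, X_B, Z_C, X_C}, and every operator in {Z_B, X_B} commutes with every operator in {Z_C, X_C}. Write P_Q^0 = P⁰(Z_Q), P_Q^1 = P¹(Z_Q). Assume: P_A^1 P_B^1 ψ = 0; P_A^0 P_C^1 ψ = P_A^0 P_B^0 ψ; P_B^0 P_C^1 ψ = P_B^0 P_A^0 ψ; P_A^0 P_C^0 ψ = P_A^0 P_B^1 ψ; P_B^0 P_C^0 ψ = P_B^0 P_A^1 ψ; P_A^0 X_C P_C^1 ψ = P_A^0 P_C^0 X_C ψ; P_B^0 X_C P_C^1 ψ = P_B^0 P_C^0 X_C ψ; (1/γ)·P_A^0 X_C P_C^1 ψ = P_A^0 X_B P_B^1 ψ; (1/γ)·P_B^0 X_C P_C^1 ψ = P_B^0 X_A P_A^1 ψ. Then, with κ = P_A^0 X_C P_C^1 ψ: (i) P_A^0 P_B^0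 P_C^0 ψ = 0, P_A^0 P_B^1 P_C^1 ψ = 0, P_A^1 P_B^0 P_C^1 ψ = 0, P_A^1 P_B^1 P_C^0 ψ = 0, and P_A^1 P_B^1 P_C^1 ψ = 0; (ii) P_A^0 P_B^0 X_C P_C^1 ψ = κ, P_A^0 X_B P_B^1 P_C^0 ψ = (1/γ)·κ, and X_A P_A^1 P_B^0 P_C^0 ψ = (1/γ)·κ. -/
open scoped ComplexInnerProductSpace

/-- A binary observable: a self-adjoint continuous linear map squaring to the identity. -/
structure IsBinaryObservable {H : Type*} [NormedAddCommGroup H] [InnerProductSpace ℂ H]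
    [CompleteSpace H] (A : H →L[ℂ] H) : Prop where
  selfAdjoint : IsSelfAdjoint A
  mul_self_eq_one : A ∘L A = 1

/-- Projection onto the `+1` eigenspace of a binary observable. -/
noncomputable def projP0 {H : Type*} [NormedAddCommGroup H] [InnerProductSpace ℂ H]
    (Z : H →L[ℂ] H) : H →L[ℂ] H := (2 : ℂ)⁻¹ • (1 + Z)

/-- Projection onto the `−1` eigenspace of a binary observable. -/
noncomputable def projP1 {H : Type*} [NormedAddCommGroup H] [InnerProductSpace ℂ H]
    (Z : H →L[ℂ] H) : H →L[ℂ] H := (2 : ℂ)⁻¹ • (1 - Z)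

section Aux

variable {H : Type*} [NormedAddCommGroup H] [InnerProductSpace ℂ H]

private lemma commute_apply' {A B : H →L[ℂ] H} (h : Commute A B) (x : H) :
    A (B x) = B (A x) := by
  have h' := congrArg (fun f : H →L[ℂ] H => f x) h.eq
  simpa [ContinuousLinearMap.mul_apply] using h'

private lemma projP0_add_projP1' (Z : H →L[ℂ] H) (x : H) :
    projP0 Z x + projP1 Z x = x := by
  simp only [projP0, projP1, ContinuousLinearMap.smul_apply, ContinuousLinearMap.add_apply,
    ContinuousLinearMap.sub_apply, ContinuousLinearMap.one_apply]
  module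

private lemma ZZ_apply {Z : H →L[ℂ] H} (hZ : Z ∘L Z = 1) (x : H) : Z (Z x) = x := by
  have h' := congrArg (fun f : H →L[ℂ] H => f x) hZ
  simpa using h'

private lemma projP0_projP1' {Z : H →L[ℂ] H} (hZ : Z ∘L Z = 1) (x : H) :
    projP0 Z (projP1 Z x) = 0 := by
  simp only [projP0, projP1, ContinuousLinearMap.smul_apply, ContinuousLinearMap.add_apply,
    ContinuousLinearMap.sub_apply, ContinuousLinearMap.one_apply, map_smul, map_sub, map_add,
    ZZ_apply hZ]
  module

private lemma projP1_projP0' {Z : H →L[ℂ] H} (hZ : Z ∘L Z = 1) (x : H) :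
    projP1 Z (projP0 Z x) = 0 := by
  simp only [projP0, projP1, ContinuousLinearMap.smul_apply, ContinuousLinearMap.add_apply,
    ContinuousLinearMap.sub_apply, ContinuousLinearMap.one_apply, map_smul, map_sub, map_add,
    ZZ_apply hZ]
  module

private lemma projP0_comm {Z W : H →L[ℂ] H} (h : Commute Z W) (x : H) :
    projP0 Z (W x) = W (projP0 Z x) := by
  simp only [projP0, ContinuousLinearMap.smul_apply, ContinuousLinearMap.add_apply,
    ContinuousLinearMap.one_apply, map_smul, map_add, commute_apply' h]

private lemma projP1_comm {Z W : H →L[ℂ] H} (h : Commute Z W) (x : H) :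
    projP1 Z (W x) = W (projP1 Z x) := by
  simp only [projP1, ContinuousLinearMap.smul_apply, ContinuousLinearMap.sub_apply,
    ContinuousLinearMap.one_apply, map_smul, map_sub, commute_apply' h]

private lemma commute_projP0 {Z W : H →L[ℂ] H} (h : Commute Z W) :
    Commute Z (projP0 W) := by
  unfold projP0
  exact ((Commute.one_right Z).add_right h).smul_right _

private lemma commute_projP1 {Z W : H →L[ℂ] H} (h : Commute Z W) :
    Commute Z (projP1 W) := by
  unfold projP1
  exact ((Commute.one_right Z).sub_right h).smul_right _

end Aux

theorem stmt11 {H : Type*} [NormedAddCommGroup H] [InnerProductSpace ℂ H] [CompleteSpace H]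
    (ψ : H) (γ : ℝ) (hγ : γ ≠ 0)
    (ZA XA ZB XB ZC XC : H →L[ℂ] H)
    (hZA : IsBinaryObservable ZA) (hXA : IsBinaryObservable XA)
    (hZB : IsBinaryObservable ZB) (hXB : IsBinaryObservable XB)
    (hZC : IsBinaryObservable ZC) (hXC : IsBinaryObservable XC)
    (hAcomm : ∀ P ∈ [ZA, XA], ∀ Q ∈ [ZB, XB, ZC, XC], Commute P Q)
    (hBcomm : ∀ P ∈ [ZB, XB], ∀ Q ∈ [ZC, XC], Commute P Q)
    (h0 : projP1 ZA (projP1 ZB ψ) = 0)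
    (h1 : projP0 ZA (projP1 ZC ψ) = projP0 ZA (projP0 ZB ψ))
    (h2 : projP0 ZB (projP1 ZC ψ) = projP0 ZB (projP0 ZA ψ))
    (h3 : projP0 ZA (projP0 ZC ψ) = projP0 ZA (projP1 ZB ψ))
    (h4 : projP0 ZB (projP0 ZC ψ) = projP0 ZB (projP1 ZA ψ))
    (h5 : projP0 ZA (XC (projP1 ZC ψ)) = projP0 ZA (projP0 ZC (XC ψ)))
    (h6 : projP0 ZB (XC (projP1 ZC ψ)) = projP0 ZB (projP0 ZC (XC ψ)))
    (h7 : (γ : ℂ)⁻¹ • projP0 ZA (XC (projP1 ZC ψ)) = projP0 ZA (XB (projP1 ZB ψ)))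
    (h8 : (γ : ℂ)⁻¹ • projP0 ZB (XC (projP1 ZC ψ)) = projP0 ZB (XA (projP1 ZA ψ))) :
    -- (i)
    (projP0 ZA (projP0 ZB (projP0 ZC ψ)) = 0 ∧
     projP0 ZA (projP1 ZB (projP1 ZC ψ)) = 0 ∧
     projP1 ZA (projP0 ZB (projP1 ZC ψ)) = 0 ∧
     projP1 ZA (projP1 ZB (projP0 ZC ψ)) = 0 ∧
     projP1 ZA (projP1 ZB (projP1 ZC ψ)) = 0) ∧
    -- (ii), with κ = P_A^0 X_C P_C^1 ψ
    (projP0 ZA (projP0 ZB (XC (projP1 ZC ψ))) = projP0 ZA (XC (projP1 ZC ψ)) ∧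
     projP0 ZA (XB (projP1 ZB (projP0 ZC ψ))) = (γ : ℂ)⁻¹ • projP0 ZA (XC (projP1 ZC ψ)) ∧
     XA (projP1 ZA (projP0 ZB (projP0 ZC ψ))) = (γ : ℂ)⁻¹ • projP0 ZA (XC (projP1 ZC ψ))) := by
  have hZA2 := hZA.mul_self_eq_one
  have hZB2 := hZB.mul_self_eq_one
  have hZC2 := hZC.mul_self_eq_one
  have cAB : Commute ZA ZB := hAcomm ZA (by simp) ZB (by simp)
  have cAC : Commute ZA ZC := hAcomm ZA (by simp) ZC (by simp)
  have cAXC : Commute ZA XC := hAcomm ZA (by simp) XC (by simp)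
  have cXAB : Commute XA ZB := hAcomm XA (by simp) ZB (by simp)
  have cBC : Commute ZB ZC := hBcomm ZB (by simp) ZC (by simp)
  have cBXC : Commute ZB XC := hBcomm ZB (by simp) XC (by simp)
  have cXBC : Commute XB ZC := hBcomm XB (by simp) ZC (by simp)
  -- (i)(a)
  have stepa : projP0 ZA (projP0 ZB (projP0 ZC ψ)) = 0 := by
    have hz : projP0 ZB (projP0 ZA (projP1 ZB ψ)) = 0 := by
      rw [projP0_comm (commute_projP0 cAB.symm) _, projP0_projP1' hZB2, map_zero]
    have h := congrArg (⇑(projP0 ZB)) h3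
    rw [hz, projP0_comm (commute_projP0 cAB.symm) _] at h
    exact h
  -- (i)(b)
  have stepb : projP0 ZA (projP1 ZB (projP1 ZC ψ)) = 0 := by
    have hz : projP1 ZB (projP0 ZA (projP0 ZB ψ)) = 0 := by
      rw [projP1_comm (commute_projP0 cAB.symm) _, projP1_projP0' hZB2, map_zero]
    have h := congrArg (⇑(projP1 ZB)) h1
    rw [hz, projP1_comm (commute_projP0 cAB.symm) _] at h
    exact h
  -- (i)(c)
  have stepc : projP1 ZA (projP0 ZB (projP1 ZC ψ)) = 0 := by
    have hz : projP1 ZA (projP0 ZB (projP0 ZA ψ)) = 0 := by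
      rw [projP1_comm (commute_projP0 cAB) _, projP1_projP0' hZA2, map_zero]
    have h := congrArg (⇑(projP1 ZA)) h2
    rw [hz] at h
    exact h
  -- (i)(d)
  have stepd : projP1 ZA (projP1 ZB (projP0 ZC ψ)) = 0 := by
    have h := congrArg (⇑(projP0 ZC)) h0
    rw [map_zero, projP0_comm (commute_projP1 cAC.symm) _,
      projP0_comm (commute_projP1 cBC.symm) _] at h
    exact h
  -- (i)(e)
  have stepe : projP1 ZA (projP1 ZB (projP1 ZC ψ)) = 0 := by
    have h := congrArg (⇑(projP1 ZC)) h0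
    rw [map_zero, projP1_comm (commute_projP1 cAC.symm) _,
      projP1_comm (commute_projP1 cBC.symm) _] at h
    exact h
  -- key facts
  have key1 : projP1 ZB (projP1 ZC ψ) = 0 := by
    have hs := projP0_add_projP1' ZA (projP1 ZB (projP1 ZC ψ))
    rw [stepb, stepe, add_zero] at hs
    exact hs.symm
  have key2 : projP1 ZA (projP1 ZC ψ) = 0 := by
    have hs := projP0_add_projP1' ZB (projP1 ZA (projP1 ZC ψ))
    rw [projP0_comm (commute_projP1 cAB.symm) _, stepc,
      projP1_comm (commute_projP1 cAB.symm) _, key1, map_zero, add_zero] at hs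
    exact hs.symm
  -- (ii)(f)
  have stepf : projP0 ZA (projP0 ZB (XC (projP1 ZC ψ))) = projP0 ZA (XC (projP1 ZC ψ)) := by
    have hs := congrArg (⇑(projP0 ZA)) (projP0_add_projP1' ZB (XC (projP1 ZC ψ)))
    rw [map_add, projP1_comm cBXC _, key1, map_zero, map_zero, add_zero] at hs
    exact hs
  -- (ii)(g)
  have stepg : projP0 ZA (XB (projP1 ZB (projP0 ZC ψ)))
      = (γ : ℂ)⁻¹ • projP0 ZA (XC (projP1 ZC ψ)) := by
    have hψ : projP1 ZB (projP0 ZC ψ) = projP1 ZB ψ := by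
      conv_rhs => rw [← projP0_add_projP1' ZC ψ]
      rw [map_add, key1, add_zero]
    rw [hψ]
    exact h7.symm
  -- auxiliary: P_B^0 κ-version equals P_A^0 κ-version
  have hBA0 : projP0 ZB (XC (projP1 ZC ψ)) = projP0 ZA (XC (projP1 ZC ψ)) := by
    have hs := projP0_add_projP1' ZA (projP0 ZB (XC (projP1 ZC ψ)))
    rw [stepf, projP1_comm (commute_projP0 cAB) _, projP1_comm cAXC _, key2, map_zero,
      map_zero, add_zero] at hs
    exact hs.symm
  -- (ii)(h)
  have steph : XA (projP1 ZA (projP0 ZB (projP0 ZC ψ)))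
      = (γ : ℂ)⁻¹ • projP0 ZA (XC (projP1 ZC ψ)) := by
    have hψA : projP1 ZA (projP0 ZC ψ) = projP1 ZA ψ := by
      conv_rhs => rw [← projP0_add_projP1' ZC ψ]
      rw [map_add, key2, add_zero]
    rw [projP1_comm (commute_projP0 cAB) _, ← projP0_comm cXAB.symm _, hψA, ← h8, hBA0]
  exact ⟨⟨stepa, stepb, stepc, stepd, stepe⟩, stepf, stepg, steph⟩
end

section
/- Let H be a complex Hilbert space, ψ ∈ H a unit vector, δ ≥ 0, and let Z_A, Z_B, X_C, Z_C be binary observables on H such that Z_A commutes with Z_B, X_C, Z_C, Z_B commutes with X_C and Z_C, and X_C commutes with Z_A and Z_B. Write P_Q^0 = P⁰(Z_Q), P_Q^1 = P¹(Z_Q), and set ε₁ = Re⟨ψ, P_A^0 P_B^0 P_C^1 ψ⟩ − 1/3. If ‖P_A^0 (X_C Z_C + Z_C X_C) ψ‖ ≤ δ, then |3·‖P_A^0 P_B^0 P_C^0 X_C ψ‖² − 1 − 3ε₁| ≤ (3/2)·δ. -/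
open scoped ComplexInnerProductSpace

/-!
Conjugation by `X_C` turns `P⁰(Z_C)` into `P¹(Z_C)` plus half of `X_C (X_C Z_C + Z_C X_C)`.
Since `Q = P_A^0 P_B^0 P_C^0` is an orthogonal projection and `X_C` commutes with its `A` and `B`
factors, `‖Q X_C ψ‖² = Re⟨ψ, X_C Q X_C ψ⟩` equals `ε₁ + 1/3` plus half of
`Re⟨ψ, P_B^0 X_C P_A^0 (X_C Z_C + Z_C X_C) ψ⟩`, which Cauchy–Schwarz bounds by `δ`.
-/

section
variable {H : Type*} [NormedAddCommGroup H] [InnerProductSpace ℂ H]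

lemma Commute.projP0_left {Z T : H →L[ℂ] H} (h : Commute Z T) : Commute (projP0 Z) T :=
  ((Commute.one_left T).add_left h).smul_left _

lemma Commute.projP0_right {T Z : H →L[ℂ] H} (h : Commute T Z) : Commute T (projP0 Z) :=
  h.symm.projP0_left.symm

lemma isIdempotentElem_projP0 {Z : H →L[ℂ] H} (hZ : Z * Z = 1) : IsIdempotentElem (projP0 Z) := by
  rw [IsIdempotentElem, projP0, smul_mul_smul_comm, add_mul, mul_add, mul_add, hZ]
  simp only [mul_one, one_mul]
  match_scalars <;> norm_num

/-- The formula comes from `X Z X = X (X Z + Z X) - Z`. -/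
lemma mul_mul_projP0_mul {X T : H →L[ℂ] H} (hX : X * X = 1) (hT : Commute T X) (Z : H →L[ℂ] H) :
    X * (T * projP0 Z) * X = T * projP1 Z + (2 : ℂ)⁻¹ • (T * (X * (X * Z + Z * X))) := by
  have hXZX : X * projP0 Z * X = projP1 Z + (2 : ℂ)⁻¹ • (X * (X * Z + Z * X)) := by
    rw [mul_add X, ← mul_assoc X X, hX, one_mul, projP0, projP1, mul_smul_comm, smul_mul_assoc,
      mul_add, mul_one, add_mul, hX, ← mul_assoc]
    module
  calc X * (T * projP0 Z) * X = T * (X * projP0 Z * X) := by rw [← mul_assoc, ← hT.eq]; noncomm_ring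
    _ = _ := by rw [hXZX, mul_add, mul_smul_comm]

end

section
variable {H : Type*} [NormedAddCommGroup H] [InnerProductSpace ℂ H] [CompleteSpace H]

lemma IsStarProjection.norm_apply_le {P : H →L[ℂ] H} (hP : IsStarProjection P) (v : H) :
    ‖P v‖ ≤ ‖v‖ := by
  simpa using P.le_of_opNorm_le (hP.norm_le P) v

lemma IsStarProjection.norm_sq_apply {P : H →L[ℂ] H} (hP : IsStarProjection P) (v : H) :
    ‖P v‖ ^ 2 = (⟪v, P v⟫).re := by
  rw [← inner_self_eq_norm_sq (𝕜 := ℂ), ← ContinuousLinearMap.adjoint_inner_right,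
    hP.isSelfAdjoint.adjoint_eq, ← mul_apply_eq_comp, hP.isIdempotentElem.eq]
  rfl

lemma IsSelfAdjoint.projP0 {Z : H →L[ℂ] H} (hZ : IsSelfAdjoint Z) : IsSelfAdjoint (projP0 Z) := by
  rw [_root_.projP0, IsSelfAdjoint, star_smul, star_add, star_one, hZ.star_eq]
  norm_num

namespace IsBinaryObservable

lemma mul_self {Z : H →L[ℂ] H} (hZ : IsBinaryObservable Z) : Z * Z = 1 := hZ.mul_self_eq_one

lemma norm_apply {Z : H →L[ℂ] H} (hZ : IsBinaryObservable Z) (v : H) : ‖Z v‖ = ‖v‖ :=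
  ContinuousLinearMap.norm_map_of_mem_unitary
    (Unitary.mem_iff.mpr (by simp [hZ.selfAdjoint.star_eq, hZ.mul_self])) v

lemma isStarProjection_projP0 {Z : H →L[ℂ] H} (hZ : IsBinaryObservable Z) :
    IsStarProjection (projP0 Z) :=
  ⟨isIdempotentElem_projP0 hZ.mul_self, hZ.selfAdjoint.projP0⟩

lemma abs_re_inner_le {X P : H →L[ℂ] H} (hX : IsBinaryObservable X) (hP : IsStarProjection P)
    (u v : H) : |(⟪u, P (X v)⟫).re| ≤ ‖u‖ * ‖v‖ :=
  calc |(⟪u, P (X v)⟫).re| ≤ ‖⟪u, P (X v)⟫‖ := Complex.abs_re_le_norm _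
    _ ≤ ‖u‖ * ‖P (X v)‖ := norm_inner_le_norm _ _
    _ ≤ ‖u‖ * ‖v‖ := by
        rw [← hX.norm_apply v]
        gcongr
        exact hP.norm_apply_le _

end IsBinaryObservable

end

theorem stmt17_general {H : Type*} [NormedAddCommGroup H] [InnerProductSpace ℂ H] [CompleteSpace H]
    (ψ : H) (hψ : ‖ψ‖ = 1) (δ : ℝ)
    (ZA ZB XC ZC : H →L[ℂ] H)
    (hZA : IsBinaryObservable ZA) (hZB : IsBinaryObservable ZB)
    (hXC : IsBinaryObservable XC) (hZC : IsBinaryObservable ZC)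
    (hA1 : Commute ZA ZB) (hA2 : Commute ZA XC) (hA3 : Commute ZA ZC)
    (hB1 : Commute ZB XC) (hB2 : Commute ZB ZC)
    (ε₁ : ℝ)
    (hε₁ : ε₁ = (⟪ψ, projP0 ZA (projP0 ZB (projP1 ZC ψ))⟫).re - 1/3)
    (h : ‖projP0 ZA ((XC * ZC + ZC * XC) ψ)‖ ≤ δ) :
    |3 * ‖projP0 ZA (projP0 ZB (projP0 ZC (XC ψ)))‖ ^ 2 - 1 - 3 * ε₁| ≤ (3/2) * δ := by
  set PA := projP0 ZA
  set PB := projP0 ZB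
  set S := XC * ZC + ZC * XC
  have hAB : Commute PA PB := hA1.projP0_left.projP0_right
  have hQ : IsStarProjection (PA * PB * projP0 ZC) :=
    (hZA.isStarProjection_projP0.mul hZB.isStarProjection_projP0 hAB).mul
      hZC.isStarProjection_projP0
      (hA3.projP0_left.projP0_right.mul_left hB2.projP0_left.projP0_right)
  have hmove : PA * PB * (XC * S) = PB * XC * (PA * S) := by
    rw [hAB.eq, mul_assoc PB, ← mul_assoc PA, hA2.projP0_left.eq]
    noncomm_ring
  have hconj : XC * (PA * PB * projP0 ZC) * XC
      = PA * PB * projP1 ZC + (2 : ℂ)⁻¹ • (PB * XC * (PA * S)) := by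
    rw [mul_mul_projP0_mul hXC.mul_self (hA2.projP0_left.mul_left hB1.projP0_left), hmove]
  set t := (⟪ψ, PB (XC (PA (S ψ)))⟫).re
  have hnorm : ‖(PA * PB * projP0 ZC) (XC ψ)‖ ^ 2 = ε₁ + 1/3 + 2⁻¹ * t := by
    rw [hQ.norm_sq_apply, ← ContinuousLinearMap.adjoint_inner_right, hXC.selfAdjoint.adjoint_eq,
      ← mul_apply_eq_comp, ← mul_apply_eq_comp, hconj, hε₁]
    simp [inner_add_right, inner_smul_right, t]
  have ht : |t| ≤ δ := by
    simpa [hψ] using (hXC.abs_re_inner_le hZB.isStarProjection_projP0 ψ (PA (S ψ))).trans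
      (mul_le_mul_of_nonneg_left h (norm_nonneg ψ))
  change |3 * ‖(PA * PB * projP0 ZC) (XC ψ)‖ ^ 2 - 1 - 3 * ε₁| ≤ 3/2 * δ
  rw [hnorm, show 3 * (ε₁ + 1/3 + 2⁻¹ * t) - 1 - 3 * ε₁ = 3/2 * t by ring, abs_mul,
    abs_of_pos (by norm_num)]
  gcongr

theorem stmt17 {H : Type*} [NormedAddCommGroup H] [InnerProductSpace ℂ H] [CompleteSpace H]
    (ψ : H) (hψ : ‖ψ‖ = 1) (δ : ℝ) (hδ : 0 ≤ δ)
    (ZA ZB XC ZC : H →L[ℂ] H)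
    (hZA : IsBinaryObservable ZA) (hZB : IsBinaryObservable ZB)
    (hXC : IsBinaryObservable XC) (hZC : IsBinaryObservable ZC)
    (hA1 : Commute ZA ZB) (hA2 : Commute ZA XC) (hA3 : Commute ZA ZC)
    (hB1 : Commute ZB XC) (hB2 : Commute ZB ZC)
    (ε₁ : ℝ)
    (hε₁ : ε₁ = (⟪ψ, projP0 ZA (projP0 ZB (projP1 ZC ψ))⟫).re - 1/3)
    (h : ‖projP0 ZA ((XC * ZC + ZC * XC) ψ)‖ ≤ δ) :
    |3 * ‖projP0 ZA (projP0 ZB (projP0 ZC (XC ψ)))‖ ^ 2 - 1 - 3 * ε₁| ≤ (3/2) * δ :=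
  stmt17_general ψ hψ δ ZA ZB XC ZC hZA hZB hXC hZC hA1 hA2 hA3 hB1 hB2 ε₁ hε₁ h
end
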